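/- arXiv:1010.4753 — 3 statements merged into one kernel-verified Lean document; each statement's English description precedes it below -/
import Mathlib

section
/- Let F_2 be the free group on generators a, b. If f is an automorphism of F_2 with f(a) = a, then there exist integers n, m and ε ∈ {±1} such that f(b) = a^n b^ε a^m. -/
/-!
Write `f b = aⁿ w aᵐ` where the reduced word of `w` neither starts nor ends with `a^{±1}`.
If `w` is a single letter it is `b^{±1}`, and `w = 1` would make `f` non-injective. Otherwise
`f` factors through `φ : a ↦ a, b ↦ w`, so `b` lies in the image of `φ`. Since
`w = p c p⁻¹` with `c` cyclically reduced, every nonzero power `wˡ` again starts and ends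
with `b^{±1}` and has length at least `|w| ≥ 2`. Hence, cutting `x` into syllables `aᵏ` and
`bˡ`, no cancellation occurs between the images of consecutive syllables, and `φ x` either
starts with `a^{±1}` or has length at least `2`: it is never `b`.
-/

namespace FreeGroup

variable {α : Type*} [DecidableEq α]

def headGen (x : FreeGroup α) : Option α := x.toWord.head?.map Prod.fst

def lastGen (x : FreeGroup α) : Option α := x.toWord.getLast?.map Prod.fst

@[simp]
theorem headGen_one : headGen (1 : FreeGroup α) = none := rfl

@[simp]
theorem headGen_inv (x : FreeGroup α) : headGen x⁻¹ = lastGen x := by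
  simp [headGen, lastGen, invRev, List.head?_reverse, Option.map_map, Function.comp_def]

@[simp]
theorem lastGen_inv (x : FreeGroup α) : lastGen x⁻¹ = headGen x := by
  simpa using (headGen_inv x⁻¹).symm

theorem toWord_mul_of_lastGen_ne_headGen {x y : FreeGroup α}
    (h : ∀ c ∈ lastGen x, ∀ d ∈ headGen y, c ≠ d) :
    (x * y).toWord = x.toWord ++ y.toWord := by
  rw [toWord_mul, IsReduced.reduce_eq]
  refine List.isChain_append.mpr ⟨isReduced_toWord, isReduced_toWord, fun u hu v hv huv => ?_⟩
  exact absurd huv (h u.1 (Option.mem_map_of_mem _ hu) v.1 (Option.mem_map_of_mem _ hv))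

@[simp]
theorem headGen_eq_none {x : FreeGroup α} : headGen x = none ↔ x = 1 := by
  simp [headGen]

theorem headGen_mul {x y : FreeGroup α} (h : ∀ c ∈ lastGen x, ∀ d ∈ headGen y, c ≠ d)
    (hx : x ≠ 1) : headGen (x * y) = headGen x := by
  rw [headGen, toWord_mul_of_lastGen_ne_headGen h,
    List.head?_append_of_ne_nil _ (mt toWord_eq_nil_iff.mp hx), headGen]

theorem toWord_pow_of_ne_zero {x : FreeGroup α} {n : ℕ} (hn : n ≠ 0) :
    (x ^ n).toWord = reduceCyclically.conjugator x.toWord ++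
      (List.replicate n (reduceCyclically x.toWord)).flatten ++
        invRev (reduceCyclically.conjugator x.toWord) := by
  rw [FreeGroup.toWord_pow, reduceCyclically.reduce_flatten_replicate isReduced_toWord, if_neg hn]

theorem headGen_pow (x : FreeGroup α) {n : ℕ} (hn : n ≠ 0) : headGen (x ^ n) = headGen x := by
  conv_rhs => rw [headGen, ← reduceCyclically.conj_conjugator_reduceCyclically x.toWord]
  simp only [headGen, toWord_pow_of_ne_zero hn, List.head?_append, List.head?_flatten_replicate hn]

theorem lastGen_pow (x : FreeGroup α) {n : ℕ} (hn : n ≠ 0) : lastGen (x ^ n) = lastGen x := by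
  conv_rhs => rw [lastGen, ← reduceCyclically.conj_conjugator_reduceCyclically x.toWord]
  simp only [lastGen, toWord_pow_of_ne_zero hn, List.getLast?_append,
    List.getLast?_flatten_replicate hn]

theorem length_toWord_le_pow (x : FreeGroup α) {n : ℕ} (hn : n ≠ 0) :
    x.toWord.length ≤ (x ^ n).toWord.length := by
  conv_lhs => rw [← reduceCyclically.conj_conjugator_reduceCyclically x.toWord]
  simp only [toWord_pow_of_ne_zero hn, List.length_append, List.length_flatten, List.map_replicate,
    List.sum_replicate, smul_eq_mul]
  have := Nat.le_mul_of_pos_left (reduceCyclically x.toWord).length (Nat.pos_of_ne_zero hn)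
  omega

theorem length_toWord_le_zpow (x : FreeGroup α) {k : ℤ} (hk : k ≠ 0) :
    x.toWord.length ≤ (x ^ k).toWord.length := by
  obtain ⟨n, rfl | rfl⟩ := k.eq_nat_or_neg
  all_goals
    simp only [zpow_neg, zpow_natCast, toWord_inv, invRev_length]
    exact length_toWord_le_pow x (by omega)

theorem headGen_zpow_ne {x : FreeGroup α} {a : α} (hh : headGen x ≠ some a)
    (hl : lastGen x ≠ some a) (k : ℤ) : headGen (x ^ k) ≠ some a := by
  obtain ⟨n, rfl | rfl⟩ := k.eq_nat_or_neg
  all_goals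
    rcases eq_or_ne n 0 with rfl | hn
    · simp
    · simp [headGen_pow x hn, lastGen_pow x hn, hh, hl]

theorem lastGen_zpow_ne {x : FreeGroup α} {a : α} (hh : headGen x ≠ some a)
    (hl : lastGen x ≠ some a) (k : ℤ) : lastGen (x ^ k) ≠ some a := by
  simpa [zpow_neg] using headGen_zpow_ne hh hl (-k)

theorem eq_mul_of_toWord_eq_append {x y z : FreeGroup α} (h : x.toWord = y.toWord ++ z.toWord) :
    x = y * z := by
  rw [← mk_toWord (x := x), h, ← mul_mk, mk_toWord, mk_toWord]

theorem toWord_of_zpow (c : α) (k : ℤ) :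
    (of c ^ k).toWord = List.replicate k.natAbs (c, decide (0 ≤ k)) := by
  obtain ⟨n, rfl | rfl⟩ := k.eq_nat_or_neg
  · simp
  · rcases eq_or_ne n 0 with rfl | hn
    · simp
    · simp [invRev, hn]

theorem headGen_of_zpow (c : α) {k : ℤ} (hk : k ≠ 0) : headGen (of c ^ k) = some c := by
  obtain ⟨n, hn⟩ := Nat.exists_eq_succ_of_ne_zero (Int.natAbs_ne_zero.mpr hk)
  simp [headGen, toWord_of_zpow, hn, List.replicate_succ]

theorem lastGen_of_zpow (c : α) {k : ℤ} (hk : k ≠ 0) : lastGen (of c ^ k) = some c := by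
  simpa [zpow_neg] using headGen_of_zpow c (neg_ne_zero.mpr hk)

theorem exists_toWord_of_zpow_eq {c : α} {L : List (α × Bool)} (hL : IsReduced L)
    (hc : ∀ u ∈ L, u.1 = c) : ∃ k : ℤ, (of c ^ k).toWord = L := by
  rcases L with _ | ⟨⟨c', s⟩, L⟩
  · exact ⟨0, rfl⟩
  obtain rfl : c' = c := hc _ List.mem_cons_self
  obtain ⟨n, rfl⟩ : ∃ n, L = List.replicate n (c', s) := by
    refine ⟨_, List.isChain_cons_eq_iff_eq_replicate.mp
      (hL.imp_of_mem_imp fun u v hu hv huv => ?_)⟩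
    exact Prod.ext ((hc u hu).trans (hc v hv).symm) (huv ((hc u hu).trans (hc v hv).symm))
  refine ⟨if s then n + 1 else -(n + 1 : ℕ), ?_⟩
  rw [toWord_of_zpow, ← List.replicate_succ]
  cases s <;> simp <;> omega

theorem exists_toWord_eq_zpow_append (c : α) (x : FreeGroup α) :
    ∃ (k : ℤ) (y : FreeGroup α), x.toWord = (of c ^ k).toWord ++ y.toWord ∧
      headGen y ≠ some c := by
  let p : α × Bool → Bool := fun u => decide (u.1 = c)
  have hsplit : x.toWord = x.toWord.takeWhile p ++ x.toWord.dropWhile p :=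
    List.takeWhile_append_dropWhile.symm
  have hred : IsReduced (x.toWord.takeWhile p ++ x.toWord.dropWhile p) :=
    hsplit ▸ isReduced_toWord
  obtain ⟨k, hk⟩ := exists_toWord_of_zpow_eq (hred.infix (List.prefix_append _ _).isInfix)
    fun u hu => by simpa [p] using List.mem_takeWhile_imp hu
  have hdrop : (mk (x.toWord.dropWhile p)).toWord = x.toWord.dropWhile p :=
    toWord_mk.trans (hred.infix (List.suffix_append _ _).isInfix).reduce_eq
  refine ⟨k, mk (x.toWord.dropWhile p), by rw [hk, hdrop]; exact hsplit, ?_⟩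
  have hhead := List.head?_dropWhile_not p x.toWord
  rw [headGen, hdrop]
  rcases h : (x.toWord.dropWhile p).head? with _ | u
  · simp
  · rw [h] at hhead
    simpa [p] using hhead

theorem exists_toWord_eq_append_zpow (c : α) (x : FreeGroup α) :
    ∃ (y : FreeGroup α) (k : ℤ), x.toWord = y.toWord ++ (of c ^ k).toWord ∧
      lastGen y ≠ some c := by
  obtain ⟨k, y, hx, hy⟩ := exists_toWord_eq_zpow_append c x⁻¹
  refine ⟨y⁻¹, -k, ?_, by simpa using hy⟩
  rw [← invRev_invRev (L₁ := x.toWord), ← toWord_inv, hx, invRev_append, zpow_neg, toWord_inv,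
    toWord_inv]

theorem exists_eq_zpow_mul_mul_zpow (c : α) (x : FreeGroup α) :
    ∃ (n : ℤ) (w : FreeGroup α) (m : ℤ), x = of c ^ n * w * of c ^ m ∧
      headGen w ≠ some c ∧ lastGen w ≠ some c := by
  obtain ⟨n, y, hxy, hy⟩ := exists_toWord_eq_zpow_append c x
  obtain ⟨w, m, hyw, hw⟩ := exists_toWord_eq_append_zpow c y
  refine ⟨n, w, m, ?_, ?_, hw⟩
  · rw [eq_mul_of_toWord_eq_append hxy, eq_mul_of_toWord_eq_append hyw, mul_assoc]
  · rcases eq_or_ne w 1 with rfl | hw1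
    · simp
    · rwa [headGen, hyw, List.head?_append_of_ne_nil _ (mt toWord_eq_nil_iff.mp hw1)] at hy

theorem of_ne_of_zpow {a c : α} (h : c ≠ a) (k : ℤ) : of c ≠ of a ^ k := by
  intro hc
  have hmem : (c, true) ∈ (of a ^ k).toWord := by simp [← hc]
  rw [toWord_of_zpow] at hmem
  exact h (Prod.ext_iff.mp (List.eq_of_mem_replicate hmem)).1

theorem eq_zpow_of_toWord_eq_singleton {x : FreeGroup α} {c : α} {s : Bool}
    (h : x.toWord = [(c, s)]) : x = of c ^ (if s then 1 else -1 : ℤ) := by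
  apply toWord_injective
  rw [h, toWord_of_zpow]
  cases s <;> simp

variable {a : α} {w : FreeGroup α}

theorem headGen_zpow_mul_ne_and_two_le_length (hw : 2 ≤ w.toWord.length)
    (hh : headGen w ≠ some a) (hl : lastGen w ≠ some a) {l : ℤ} (hl0 : l ≠ 0)
    {z : FreeGroup α} (hz : ∀ c ∈ headGen z, c = a) :
    headGen (w ^ l * z) ≠ some a ∧ 2 ≤ (w ^ l * z).toWord.length := by
  have hwl : 2 ≤ (w ^ l).toWord.length := hw.trans (length_toWord_le_zpow w hl0)
  have hw1 : w ^ l ≠ 1 := by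
    intro h
    simp [h] at hwl
  have hcat : ∀ c ∈ lastGen (w ^ l), ∀ d ∈ headGen z, c ≠ d := by
    rintro c hc d hd rfl
    exact lastGen_zpow_ne hh hl l (by rwa [hz c hd] at hc)
  refine ⟨by rw [headGen_mul hcat hw1]; exact headGen_zpow_ne hh hl l, ?_⟩
  rw [toWord_mul_of_lastGen_ne_headGen hcat, List.length_append]
  omega

theorem headGen_of_zpow_mul {k : ℤ} (hk : k ≠ 0) {z : FreeGroup α}
    (hz : headGen z ≠ some a) : headGen (of a ^ k * z) = some a := by
  have hcat : ∀ c ∈ lastGen (of a ^ k), ∀ d ∈ headGen z, c ≠ d := by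
    rintro c hc d hd rfl
    rw [lastGen_of_zpow a hk, Option.mem_some_iff] at hc
    exact hz (hc ▸ hd)
  rw [headGen_mul hcat (by simpa using hk), headGen_of_zpow a hk]

theorem headGen_lift_of_headGen (hw : 2 ≤ w.toWord.length) (hh : headGen w ≠ some a)
    (hl : lastGen w ≠ some a) (x : FreeGroup (Fin 2)) :
    (headGen x = some 1 →
      headGen (lift ![of a, w] x) ≠ some a ∧ 2 ≤ (lift ![of a, w] x).toWord.length) ∧
    (headGen x ≠ some 1 → ∀ c ∈ headGen (lift ![of a, w] x), c = a) := by
  induction hn : x.toWord.length using Nat.strong_induction_on generalizing x with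
  | _ n ih =>
    constructor
    · intro hx
      obtain ⟨l, y, hxy, hy⟩ := exists_toWord_eq_zpow_append 1 x
      have hl0 : l ≠ 0 := by
        rintro rfl
        exact hy (by simpa [headGen, hxy] using hx)
      have hlen : y.toWord.length < n := by
        rw [← hn, hxy, List.length_append, toWord_of_zpow, List.length_replicate]
        omega
      rw [eq_mul_of_toWord_eq_append hxy, _root_.map_mul, map_zpow, lift_apply_of]
      exact headGen_zpow_mul_ne_and_two_le_length hw hh hl hl0 ((ih _ hlen y rfl).2 hy)
    · intro hx
      obtain ⟨k, y, hxy, hy⟩ := exists_toWord_eq_zpow_append 0 x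
      rw [eq_mul_of_toWord_eq_append hxy, _root_.map_mul, map_zpow, lift_apply_of]
      rcases eq_or_ne y 1 with rfl | hy1
      · rcases eq_or_ne k 0 with rfl | hk
        · simp
        · simp [headGen_of_zpow a hk]
      have hy_head : headGen y = some 1 := by
        obtain ⟨i, hi⟩ := Option.ne_none_iff_exists'.mp (mt headGen_eq_none.mp hy1)
        rw [hi] at hy ⊢
        exact congrArg some (Fin.eq_one_of_ne_zero i (by simpa using hy))
      have hk : k ≠ 0 := by
        rintro rfl
        exact hx (by simpa [headGen, hxy] using hy_head)
      have hlen : y.toWord.length < n := by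
        rw [← hn, hxy, List.length_append, toWord_of_zpow, List.length_replicate]
        omega
      simp [headGen_of_zpow_mul hk ((ih _ hlen y rfl).1 hy_head).1]

theorem lift_ne_of (hw : 2 ≤ w.toWord.length) (hh : headGen w ≠ some a)
    (hl : lastGen w ≠ some a) {c : α} (hc : c ≠ a) (x : FreeGroup (Fin 2)) :
    lift ![of a, w] x ≠ of c := by
  intro hx
  by_cases hx1 : headGen x = some 1
  · have hlen := ((headGen_lift_of_headGen hw hh hl x).1 hx1).2
    simp [hx] at hlen
  · exact hc ((headGen_lift_of_headGen hw hh hl x).2 hx1 c (by simp [hx, headGen]))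

end FreeGroup

open FreeGroup

/-- If an automorphism of the free group `F₂ = ⟨a, b⟩` fixes `a`, then
`f(b) = aⁿ b^ε aᵐ` for some integers `n, m` and `ε ∈ {±1}`. -/
theorem stmt_1 (f : MulAut (FreeGroup (Fin 2)))
    (hf : f (FreeGroup.of 0) = FreeGroup.of 0) :
    ∃ (n m ε : ℤ), (ε = 1 ∨ ε = -1) ∧
      f (FreeGroup.of 1) =
        FreeGroup.of 0 ^ n * FreeGroup.of (1 : Fin 2) ^ ε * FreeGroup.of 0 ^ m := by
  obtain ⟨n, w₀, m, hfb, hw₀h, hw₀l⟩ := exists_eq_zpow_mul_mul_zpow 0 (f (of 1))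
  rcases Nat.lt_or_ge w₀.toWord.length 2 with hlt | hge
  · rcases h : w₀.toWord with _ | ⟨⟨i, s⟩, _ | _⟩
    · have hfa : f (of 1) = f (of 0 ^ (n + m)) := by
        rw [hfb, toWord_eq_nil_iff.mp h, map_zpow, hf, mul_one, zpow_add]
      exact absurd (f.injective hfa) (of_ne_of_zpow (by decide) _)
    · obtain rfl : i = 1 := Fin.eq_one_of_ne_zero i (by simpa [headGen, h] using hw₀h)
      refine ⟨n, m, if s then 1 else -1, by cases s <;> simp, ?_⟩
      rw [hfb, eq_zpow_of_toWord_eq_singleton h]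
    · simp [h] at hlt
  · have hcomp : (lift ![of 0, w₀]).comp (lift ![of 0, of 0 ^ n * of 1 * of 0 ^ m]) =
        f.toMonoidHom := by
      ext i
      fin_cases i <;> simp [hf, hfb]
    have hb := congrArg (· (f.symm (of 1))) hcomp
    simp only [MonoidHom.comp_apply, MulEquiv.coe_toMonoidHom, MulEquiv.apply_symm_apply] at hb
    exact absurd hb (lift_ne_of hge hw₀h hw₀l (by decide) _)
end

section
/- The automorphisms α_i, β_i (1 ≤ i ≤ n-∑s(j)), γ_j (1 < j ≤ k), δ_r (1 < r ≤ k-m) defined above pairwise commute; in particular the subgroup A of Aut(F_n) they generate is abelian. -/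
section Model
/-- Free basis: generators `y_p^j` (`j < k`, `p < s j`) and `x_i` (`i < N`). -/
abbrev RBasis (k N : ℕ) (s : Fin k → ℕ) : Type := (Σ j : Fin k, Fin (s j)) ⊕ Fin N

/-- The free group `F_n` on that basis, `n = s 1 + ⋯ + s k + N`. -/
abbrev RF (k N : ℕ) (s : Fin k → ℕ) : Type := FreeGroup (RBasis k N s)

variable {k N : ℕ} {s : Fin k → ℕ}

/-- The generator `y_p^j`. -/
def yg (j : Fin k) (p : Fin (s j)) : RF k N s := FreeGroup.of (Sum.inl ⟨j, p⟩)

/-- The generator `x_i`. -/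
def xg (i : Fin N) : RF k N s := FreeGroup.of (Sum.inr i)

/-- The free factor `A_j = ⟨y_1^j, …, y_{s(j)}^j⟩`. -/
def factor (j : Fin k) : Subgroup (RF k N s) := Subgroup.closure (Set.range fun p => yg (N := N) j p)

/-- The endomorphism conjugating the generators of the `j`-th block by `g`
and fixing all other basis elements. -/
def conjBlockHom (g : RF k N s) (j : Fin k) : RF k N s →* RF k N s :=
  FreeGroup.lift fun t => match t with
    | Sum.inl ⟨j', p⟩ =>
        if j' = j then g * FreeGroup.of (Sum.inl ⟨j', p⟩) * g⁻¹
        else FreeGroup.of (Sum.inl ⟨j', p⟩)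
    | Sum.inr i => FreeGroup.of (Sum.inr i)

/-- The endomorphism `x_i ↦ g * x_i`, fixing all other basis elements. -/
def leftMulHom (g : RF k N s) (i : Fin N) : RF k N s →* RF k N s :=
  FreeGroup.lift fun t => match t with
    | Sum.inr i' => if i' = i then g * FreeGroup.of (Sum.inr i') else FreeGroup.of (Sum.inr i')
    | t => FreeGroup.of t

/-- The endomorphism `x_i ↦ x_i * g⁻¹`, fixing all other basis elements. -/
def rightMulInvHom (g : RF k N s) (i : Fin N) : RF k N s →* RF k N s :=
  FreeGroup.lift fun t => match t with
    | Sum.inr i' => if i' = i then FreeGroup.of (Sum.inr i') * g⁻¹ else FreeGroup.of (Sum.inr i')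
    | t => FreeGroup.of t

variable (hk : 0 < k) (hs : ∀ j, 0 < s j)

/-- The element `y_1^1`. -/
def y11 (hk : 0 < k) (hs : ∀ j, 0 < s j) : RF k N s := yg ⟨0, hk⟩ ⟨0, hs _⟩

/-- `α_i : x_i ↦ y_1^1 x_i`. -/
def alphaHom (i : Fin N) : RF k N s →* RF k N s := leftMulHom (y11 hk hs) i

/-- `β_i : x_i ↦ x_i (y_1^1)⁻¹`. -/
def betaHom (i : Fin N) : RF k N s →* RF k N s := rightMulInvHom (y11 hk hs) i

/-- `γ_j`: conjugation of the `j`-th block by `y_1^1`. -/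
def gammaHom (j : Fin k) : RF k N s →* RF k N s := conjBlockHom (y11 hk hs) j

/-- `δ_j`: conjugation of the `j`-th block by `y_1^j`. -/
def deltaHom (j : Fin k) : RF k N s →* RF k N s := conjBlockHom (yg j ⟨0, hs j⟩) j

end Model

/-- The family of endomorphisms `α_i, β_i (i ≤ N), γ_j (1 < j ≤ k),
δ_r (1 < r ≤ k - m)`. -/
def genFamily {k N : ℕ} {s : Fin k → ℕ} (hk : 0 < k) (hs : ∀ j, 0 < s j) (m : ℕ) :
    Set (RF k N s →* RF k N s) :=
  Set.range (alphaHom (N := N) hk hs) ∪ Set.range (betaHom (N := N) hk hs) ∪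
    (gammaHom (N := N) hk hs) '' {j | j ≠ ⟨0, hk⟩} ∪
    (deltaHom (N := N) hs) '' {j | j ≠ ⟨0, hk⟩ ∧ (j : ℕ) < k - m}

section Helper
variable {k N : ℕ} {s : Fin k → ℕ}

lemma of_inl (j : Fin k) (p : Fin (s j)) :
    (FreeGroup.of (Sum.inl ⟨j, p⟩) : RF k N s) = yg j p := rfl

lemma of_inr (i : Fin N) : (FreeGroup.of (Sum.inr i) : RF k N s) = xg (s := s) i := rfl

@[simp] lemma conjBlockHom_yg (g : RF k N s) (j j' : Fin k) (p : Fin (s j')) :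
    conjBlockHom g j (yg j' p) = if j' = j then g * yg j' p * g⁻¹ else yg j' p := by
  simp [conjBlockHom, yg, FreeGroup.lift_apply_of]

@[simp] lemma conjBlockHom_xg (g : RF k N s) (j : Fin k) (i : Fin N) :
    conjBlockHom g j (xg i) = xg i := by
  simp [conjBlockHom, xg, FreeGroup.lift_apply_of]

@[simp] lemma leftMulHom_yg (g : RF k N s) (i : Fin N) (j : Fin k) (p : Fin (s j)) :
    leftMulHom g i (yg j p) = yg j p := by
  simp [leftMulHom, yg, FreeGroup.lift_apply_of]

@[simp] lemma leftMulHom_xg (g : RF k N s) (i i' : Fin N) :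
    leftMulHom g i (xg i') = if i' = i then g * xg i' else xg i' := by
  simp [leftMulHom, xg, FreeGroup.lift_apply_of]

@[simp] lemma rightMulInvHom_yg (g : RF k N s) (i : Fin N) (j : Fin k) (p : Fin (s j)) :
    rightMulInvHom g i (yg j p) = yg j p := by
  simp [rightMulInvHom, yg, FreeGroup.lift_apply_of]

@[simp] lemma rightMulInvHom_xg (g : RF k N s) (i i' : Fin N) :
    rightMulInvHom g i (xg i') = if i' = i then xg i' * g⁻¹ else xg i' := by
  simp [rightMulInvHom, xg, FreeGroup.lift_apply_of]

lemma key (f g : RF k N s →* RF k N s)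
    (h : ∀ t : RBasis k N s, f (g (FreeGroup.of t)) = g (f (FreeGroup.of t))) :
    f.comp g = g.comp f :=
  FreeGroup.ext_hom _ _ (by simpa using h)

end Helper

/-- The automorphisms `α_i, β_i, γ_j, δ_r` pairwise commute; in particular the
subgroup they generate is abelian. -/
theorem stmt_6 (k N m : ℕ) (hk : 0 < k) (s : Fin k → ℕ) (hs : ∀ j, 0 < s j)
    (hm : m ≤ k) :
    ∀ f ∈ genFamily (k := k) (N := N) (s := s) hk hs m,
      ∀ g ∈ genFamily (k := k) (N := N) (s := s) hk hs m,
        f.comp g = g.comp f := by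
  rintro f hf g hg
  rcases hf with (((⟨i, rfl⟩ | ⟨i, rfl⟩) | ⟨j, hj, rfl⟩) | ⟨j, ⟨hj, hjm⟩, rfl⟩) <;>
    rcases hg with (((⟨i', rfl⟩ | ⟨i', rfl⟩) | ⟨j', hj', rfl⟩) | ⟨j', ⟨hj', hjm'⟩, rfl⟩) <;>
  · apply key
    rintro (⟨jj, p⟩ | ii) <;>
      simp only [of_inl, of_inr, alphaHom, betaHom, gammaHom, deltaHom, y11,
        conjBlockHom_yg, conjBlockHom_xg, leftMulHom_yg, leftMulHom_xg,
        rightMulInvHom_yg, rightMulInvHom_xg] <;>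
      split_ifs <;>
      simp_all [map_mul, map_inv, mul_assoc] <;>
      (try (split_ifs <;> simp_all [map_mul, map_inv, mul_assoc])) <;>
      (try (intro h; subst h; simp_all)) <;>
      (try (subst_vars; rfl))
end

section
/- (Poset Lemma / Quillen) Let X be a poset and f : X → X an order-preserving map such that f(x) ≤ x for all x ∈ X (or f(x) ≥ x for all x ∈ X). Then the inclusion of the image f(X) into X induces a homotopy equivalence of order complexes; in fact the order complex of f(X) is a deformation retract of the order complex of X. -/
/-!
A point `w` of the order complex is a probability weight on a finite chain. Read from the top, the
chain cuts `[0, 1]` into consecutive intervals, one per vertex. For `s ∈ [0, 1]`, keep the top `s`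
of the mass of `w` where it is and move the rest along `f`: since moved vertices lie below kept
ones and `f x ≤ x`, the result is again carried by a chain, and it varies continuously from the
pushforward of `w` along `f` (at `s = 0`) to `w` (at `s = 1`).

As `f` need not fix `f(X)`, the prism is stopped at `s = mass of w on f(X)`: this fixes the
subcomplex pointwise and still puts positive mass on `f(X)`. Normalizing the restriction of the
result to `f(X)` gives the retraction, joined to it by a straight line.
-/

/-- The geometric realization of the order complex of a poset `X`: formal
convex combinations of points of `X` whose (finite) support is a chain. -/
def OrderComplex (X : Type*) [PartialOrder X] : Type _ :=
  {w : X → ℝ // (Function.support w).Finite ∧ IsChain (· ≤ ·) (Function.support w) ∧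
    (∀ x, 0 ≤ w x) ∧ ∑ᶠ x, w x = 1}

instance (X : Type*) [PartialOrder X] : TopologicalSpace (OrderComplex X) :=
  instTopologicalSpaceSubtype

/-- The subcomplex of `OrderComplex X` spanned by the image `f(X)`
(with its induced order): combinations supported on chains in `Set.range f`. -/
def OrderComplex.imageSub {X : Type*} [PartialOrder X] (f : X → X) :
    Set (OrderComplex X) :=
  {w | Function.support w.1 ⊆ Set.range f}

open Function Set unitInterval

noncomputable section

def IsStrongDeformationRetract {Y : Type*} [TopologicalSpace Y] (A : Set Y) : Prop :=
  ∃ r : C(Y, Y), (∀ y, r y ∈ A) ∧ (∀ y ∈ A, r y = y) ∧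
    ContinuousMap.HomotopicRel r (ContinuousMap.id Y) A

lemma IsStrongDeformationRetract.preimage_homeomorph {Y Z : Type*} [TopologicalSpace Y]
    [TopologicalSpace Z] {A : Set Z} (hA : IsStrongDeformationRetract A) (e : Y ≃ₜ Z) :
    IsStrongDeformationRetract (e ⁻¹' A) := by
  obtain ⟨r, hrA, hr, ⟨H⟩⟩ := hA
  refine ⟨(e.symm : C(Z, Y)).comp (r.comp e), fun y => by simpa using hrA (e y),
    fun y hy => by simp [hr _ hy], ⟨?_⟩⟩
  exact
    { toHomotopy := ((ContinuousMap.Homotopy.refl (e.symm : C(Z, Y))).comp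
        (H.toHomotopy.compContinuousMap e)).cast rfl (by ext; simp)
      prop' := fun t y hy => by simp [H.eq_fst t hy] }

namespace OrderComplex

variable {X : Type*} [PartialOrder X]

def supportFinset (w : OrderComplex X) : Finset X := w.2.1.toFinset

@[simp]
lemma mem_supportFinset {w : OrderComplex X} {x : X} : x ∈ w.supportFinset ↔ w.1 x ≠ 0 := by
  simp [supportFinset]

lemma coe_supportFinset (w : OrderComplex X) : (w.supportFinset : Set X) = support w.1 :=
  w.2.1.coe_toFinset

lemma nonneg (w : OrderComplex X) (x : X) : 0 ≤ w.1 x := w.2.2.2.1 x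

lemma isChain_support (w : OrderComplex X) : IsChain (· ≤ ·) (support w.1) := w.2.2.1

lemma sum_eq_one {w : OrderComplex X} {E : Finset X} (hE : w.supportFinset ⊆ E) :
    ∑ x ∈ E, w.1 x = 1 := by
  refine (finsum_eq_sum_of_support_subset _ ?_).symm.trans w.2.2.2.2
  rw [← coe_supportFinset]
  exact_mod_cast hE

lemma continuous_weight_apply (x : X) : Continuous fun w : OrderComplex X => w.1 x :=
  (continuous_apply x).comp continuous_subtype_val

lemma continuous_of_continuous_apply {Y : Type*} [TopologicalSpace Y] {φ : Y → OrderComplex X}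
    (h : ∀ x, Continuous fun y => (φ y).1 x) : Continuous φ :=
  continuous_induced_rng.2 (continuous_pi h)

lemma support_subset_of_le {w : OrderComplex X} {g : X → ℝ} (hg0 : ∀ x, 0 ≤ g x)
    (hgw : ∀ x, g x ≤ w.1 x) : support g ⊆ support w.1 :=
  fun x hx hw => hx (le_antisymm (hw ▸ hgw x) (hg0 x))

lemma finsum_sub_sum_mem_Icc {w : OrderComplex X} {g : X → ℝ} (hg0 : ∀ x, 0 ≤ g x)
    (hgw : ∀ x, g x ≤ w.1 x) (F : Finset X) :
    ∑ᶠ x, g x - ∑ x ∈ F, g x ∈ Icc 0 (1 - ∑ x ∈ F, w.1 x) := by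
  classical
  set E := F ∪ w.supportFinset
  have hgE : support g ⊆ E := fun x hx => by
    simpa [E] using Or.inr (support_subset_of_le hg0 hgw hx)
  have hF : F ⊆ E := Finset.subset_union_left
  have hw := sum_eq_one (w := w) (Finset.subset_union_right (s₁ := F))
  rw [← Finset.sum_sdiff hF] at hw
  rw [finsum_eq_sum_of_support_subset _ hgE, ← Finset.sum_sdiff hF, add_sub_cancel_right]
  have := Finset.sum_le_sum fun x (_ : x ∈ E \ F) => hgw x
  exact ⟨Finset.sum_nonneg fun x _ => hg0 x, by linarith⟩

/-- In the topology of pointwise convergence, weights can only leak mass to far-away vertices in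
small amounts, because the mass on the support of the limit point already tends to `1`. -/
lemma continuous_finsum_of_le {Y : Type*} [TopologicalSpace Y] {φ : Y → OrderComplex X}
    (hφ : Continuous φ) {g : Y → X → ℝ} (hg0 : ∀ y x, 0 ≤ g y x)
    (hgφ : ∀ y x, g y x ≤ (φ y).1 x) (hg : ∀ x, Continuous fun y => g y x) :
    Continuous fun y => ∑ᶠ x, g y x := by
  refine continuous_iff_continuousAt.2 fun y₀ => ?_
  set F := (φ y₀).supportFinset
  have htail :
      Filter.Tendsto (fun y => ∑ᶠ x, g y x - ∑ x ∈ F, g y x) (nhds y₀) (nhds 0) := by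
    refine squeeze_zero (fun y => (finsum_sub_sum_mem_Icc (hg0 y) (hgφ y) F).1)
      (fun y => (finsum_sub_sum_mem_Icc (hg0 y) (hgφ y) F).2) ?_
    have hcont : Continuous fun y => 1 - ∑ x ∈ F, (φ y).1 x :=
      continuous_const.sub (continuous_finsetSum _ fun x _ => (continuous_weight_apply x).comp hφ)
    simpa [sum_eq_one (le_refl F)] using hcont.tendsto y₀
  have hhead : Continuous fun y => ∑ x ∈ F, g y x := continuous_finsetSum _ fun x _ => hg x
  have hy₀ : ∑ᶠ x, g y₀ x = ∑ x ∈ F, g y₀ x := by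
    have := finsum_sub_sum_mem_Icc (hg0 y₀) (hgφ y₀) F
    rw [sum_eq_one (le_refl F), sub_self] at this
    linarith [this.1, this.2]
  simpa [ContinuousAt, hy₀] using (hhead.tendsto y₀).add htail

def mass (S : Set X) (w : OrderComplex X) : ℝ := ∑ᶠ x, S.indicator w.1 x

lemma mass_eq_sum (S : Set X) {w : OrderComplex X} {E : Finset X}
    (hE : w.supportFinset ⊆ E) : mass S w = ∑ x ∈ E, S.indicator w.1 x := by
  refine finsum_eq_sum_of_support_subset _
    (support_indicator.subset.trans (inter_subset_right.trans ?_))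
  rw [← coe_supportFinset]
  exact_mod_cast hE

lemma continuous_indicator_apply (S : Set X) (x : X) :
    Continuous fun w : OrderComplex X => S.indicator w.1 x := by
  by_cases hx : x ∈ S
  · simpa [hx] using continuous_weight_apply x
  · simpa [hx] using continuous_const

lemma continuous_mass (S : Set X) : Continuous (mass (X := X) S) :=
  continuous_finsum_of_le continuous_id (fun w _ => indicator_nonneg (fun y _ => w.nonneg y) _)
    (fun w _ => indicator_le_self' (fun y _ => w.nonneg y) _)
    (continuous_indicator_apply S)

lemma mass_nonneg (S : Set X) (w : OrderComplex X) : 0 ≤ mass S w :=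
  finsum_nonneg fun _ => indicator_nonneg (fun y _ => w.nonneg y) _

lemma mass_mono {S T : Set X} (hST : S ⊆ T) (w : OrderComplex X) : mass S w ≤ mass T w := by
  rw [mass_eq_sum S le_rfl, mass_eq_sum T le_rfl]
  exact Finset.sum_le_sum fun x _ => indicator_le_indicator_of_subset hST w.nonneg x

@[simp]
lemma mass_univ (w : OrderComplex X) : mass univ w = 1 := by
  simpa [mass] using w.2.2.2.2

@[simp]
lemma mass_empty (w : OrderComplex X) : mass ∅ w = 0 := by
  simp [mass]

lemma mass_le_one (S : Set X) (w : OrderComplex X) : mass S w ≤ 1 :=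
  (mass_mono (subset_univ S) w).trans_eq (mass_univ w)

lemma mass_union {S T : Set X} (h : Disjoint S T) (w : OrderComplex X) :
    mass (S ∪ T) w = mass S w + mass T w := by
  simp only [mass_eq_sum _ (le_refl w.supportFinset), indicator_union_of_disjoint h,
    Finset.sum_add_distrib]

@[simp]
lemma mass_singleton (x : X) (w : OrderComplex X) : mass {x} w = w.1 x := by
  classical
  rw [mass, finsum_eq_single (fun y => ({x} : Set X).indicator w.1 y) x
    fun y hy => indicator_of_notMem (mt mem_singleton_iff.1 hy) _]
  exact indicator_of_mem (mem_singleton x) _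

lemma mass_congr {S T : Set X} {w : OrderComplex X}
    (h : ∀ x ∈ w.supportFinset, x ∈ S ↔ x ∈ T) : mass S w = mass T w := by
  classical
  simp only [mass_eq_sum _ (le_refl w.supportFinset)]
  exact Finset.sum_congr rfl fun x hx => by simp only [indicator_apply, h x hx]

lemma mass_eq_one_iff {S : Set X} {w : OrderComplex X} : mass S w = 1 ↔ support w.1 ⊆ S := by
  have hsplit : mass S w + mass Sᶜ w = 1 := by
    rw [← mass_union disjoint_compl_right, union_compl_self, mass_univ]
  rw [show mass S w = 1 ↔ mass Sᶜ w = 0 by constructor <;> intro h <;> linarith,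
    mass_eq_sum _ (le_refl w.supportFinset),
    Finset.sum_eq_zero_iff_of_nonneg fun x _ => indicator_nonneg (fun y _ => w.nonneg y) _]
  simp only [mem_supportFinset, indicator_apply_eq_zero, mem_compl_iff]
  exact ⟨fun h x hx => by_contra fun hxS => hx (h x hx hxS),
    fun h x hx hxS => absurd (h hx) hxS⟩

lemma mass_Ici (x : X) (w : OrderComplex X) : mass (Ici x) w = w.1 x + mass (Ioi x) w := by
  rw [← Ioi_insert, insert_eq, mass_union (T := Ioi x) (by simp), mass_singleton]

lemma mass_Ici_le_mass_Ioi {b x : X} (hbx : b < x) (w : OrderComplex X) :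
    mass (Ici x) w ≤ mass (Ioi b) w :=
  mass_mono (Ici_subset_Ioi.2 hbx) w

lemma sum_telescope_of_upperClosed (φ : ℝ → ℝ) {w : OrderComplex X} {D : Finset X}
    (hD : D ⊆ w.supportFinset)
    (hup : ∀ x ∈ w.supportFinset, ∀ y ∈ D, y ≤ x → x ∈ D) :
    ∑ x ∈ D, (φ (mass (Ici x) w) - φ (mass (Ioi x) w)) = φ (mass D w) - φ 0 := by
  classical
  induction D using Finset.strongInduction with
  | H D ih =>
  rcases D.eq_empty_or_nonempty with rfl | hne
  · simp
  obtain ⟨m, hmD, hmin⟩ := D.exists_minimal hne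
  have hsupp : ∀ z ∈ D, z ∈ support w.1 := fun z hz => mem_supportFinset.1 (hD hz)
  have hleast : ∀ y ∈ D, m ≤ y := fun y hy => by
    rcases eq_or_ne m y with rfl | hne
    · exact le_rfl
    · exact (w.isChain_support (hsupp m hmD) (hsupp y hy) hne).elim id (hmin hy)
  have hIci : mass (Ici m) w = mass D w :=
    mass_congr fun x hx => ⟨fun h => hup x hx m hmD h, fun h => hleast x h⟩
  have hIoi : mass (Ioi m) w = mass (D.erase m : Set X) w := mass_congr fun x hx => by
    simp only [mem_Ioi, Finset.coe_erase, mem_sdiff, Finset.mem_coe, mem_singleton_iff]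
    exact ⟨fun h => ⟨hup x hx m hmD h.le, h.ne'⟩, fun h => (hleast x h.1).lt_of_ne' h.2⟩
  have hup' : ∀ x ∈ w.supportFinset, ∀ y ∈ D.erase m, y ≤ x → x ∈ D.erase m := by
    intro x hx y hy hyx
    obtain ⟨hym, hyD⟩ := Finset.mem_erase.1 hy
    refine Finset.mem_erase.2 ⟨?_, hup x hx y hyD hyx⟩
    rintro rfl
    exact hym (le_antisymm hyx (hleast y hyD))
  have herase := ih (D.erase m) (Finset.erase_ssubset hmD) ((Finset.erase_subset m D).trans hD) hup'
  rw [← Finset.add_sum_erase D _ hmD, herase, hIci, hIoi]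
  ring

lemma sum_telescope (φ : ℝ → ℝ) (w : OrderComplex X) :
    ∑ x ∈ w.supportFinset, (φ (mass (Ici x) w) - φ (mass (Ioi x) w)) = φ 1 - φ 0 := by
  rw [sum_telescope_of_upperClosed φ le_rfl fun x hx _ _ _ => hx,
    mass_congr (T := univ) fun x hx => by simpa using hx, mass_univ]

section Kept

/-- Read from the top of the chain, the vertex `x` owns the interval
`[mass (Ioi x) w, mass (Ici x) w]` of `[0, 1]`; `kept s w x` is the length of its part inside
`[0, s]`, so the kept weights form the top `s` of the mass of `w`. -/
def kept (s : ℝ) (w : OrderComplex X) (x : X) : ℝ :=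
  min s (mass (Ici x) w) - min s (mass (Ioi x) w)

def moved (s : ℝ) (w : OrderComplex X) (x : X) : ℝ := w.1 x - kept s w x

variable {s : ℝ} {w : OrderComplex X} {x : X}

lemma kept_nonneg (s : ℝ) (w : OrderComplex X) (x : X) : 0 ≤ kept s w x :=
  sub_nonneg.2 (min_le_min_left s (mass_mono Ioi_subset_Ici_self w))

lemma kept_le (s : ℝ) (w : OrderComplex X) (x : X) : kept s w x ≤ w.1 x := by
  have := w.nonneg x
  simp only [kept, mass_Ici, min_def]
  split_ifs <;> linarith

lemma moved_nonneg (s : ℝ) (w : OrderComplex X) (x : X) : 0 ≤ moved s w x :=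
  sub_nonneg.2 (kept_le s w x)

lemma moved_le (s : ℝ) (w : OrderComplex X) (x : X) : moved s w x ≤ w.1 x :=
  sub_le_self _ (kept_nonneg s w x)

lemma kept_one (w : OrderComplex X) (x : X) : kept 1 w x = w.1 x := by
  rw [kept, min_eq_right (mass_le_one _ w), min_eq_right (mass_le_one _ w), mass_Ici,
    add_sub_cancel_right]

lemma moved_one (w : OrderComplex X) : moved 1 w = 0 :=
  funext fun x => by rw [moved, kept_one, sub_self, Pi.zero_apply]

lemma sum_kept (hs0 : 0 ≤ s) (hs1 : s ≤ 1) (w : OrderComplex X) :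
    ∑ x ∈ w.supportFinset, kept s w x = s := by
  have := sum_telescope (min s) w
  rwa [min_eq_left hs1, min_eq_right hs0, sub_zero] at this

lemma mass_Ioi_lt_of_kept_ne_zero (h : kept s w x ≠ 0) : mass (Ioi x) w < s := by
  by_contra! hs
  exact h (by rw [kept, min_eq_left hs, min_eq_left (hs.trans (mass_mono Ioi_subset_Ici_self w)),
    sub_self])

lemma lt_mass_Ici_of_moved_ne_zero (h : moved s w x ≠ 0) : s < mass (Ici x) w := by
  by_contra! hs
  exact h (by rw [moved, kept, min_eq_right hs,
    min_eq_right ((mass_mono Ioi_subset_Ici_self w).trans hs), mass_Ici]; ring)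

lemma le_of_moved_ne_zero_of_kept_ne_zero {b : X} (hx : moved s w x ≠ 0)
    (hb : kept s w b ≠ 0) : x ≤ b := by
  have hwx := support_subset_of_le (moved_nonneg s w) (moved_le s w) hx
  have hwb := support_subset_of_le (kept_nonneg s w) (kept_le s w) hb
  rcases eq_or_ne x b with rfl | hne
  · exact le_rfl
  refine (w.isChain_support hwx hwb hne).resolve_right fun hbx => ?_
  have := mass_Ici_le_mass_Ioi (hbx.lt_of_ne hne.symm) w
  linarith [mass_Ioi_lt_of_kept_ne_zero hb, lt_mass_Ici_of_moved_ne_zero hx]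

end Kept

section Prism

variable {f : X → X}

def pushed (f : X → X) (s : ℝ) (w : OrderComplex X) (z : X) : ℝ :=
  ∑ᶠ x, (f ⁻¹' {z}).indicator (moved s w) x

lemma pushed_eq_sum (f : X → X) (s : ℝ) {w : OrderComplex X} {E : Finset X}
    (hE : w.supportFinset ⊆ E) (z : X) :
    pushed f s w z = ∑ x ∈ E, (f ⁻¹' {z}).indicator (moved s w) x := by
  refine finsum_eq_sum_of_support_subset _ (support_indicator.subset.trans
    (inter_subset_right.trans ((support_subset_of_le (moved_nonneg s w) (moved_le s w)).trans ?_)))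
  rw [← coe_supportFinset]
  exact_mod_cast hE

lemma pushed_nonneg (f : X → X) (s : ℝ) (w : OrderComplex X) (z : X) : 0 ≤ pushed f s w z :=
  finsum_nonneg fun _ => indicator_nonneg (fun x _ => moved_nonneg s w x) _

lemma pushed_eq_zero_of_notMem_range {z : X} (hz : z ∉ range f) (s : ℝ) (w : OrderComplex X) :
    pushed f s w z = 0 :=
  finsum_eq_zero_of_forall_eq_zero fun x =>
    indicator_of_notMem (show x ∉ f ⁻¹' {z} from fun h => hz ⟨x, h⟩) _

lemma sum_pushed (f : X → X) (hs0 : 0 ≤ s) (hs1 : s ≤ 1) {E : Finset X}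
    (hE : ∀ x ∈ w.supportFinset, f x ∈ E) : ∑ z ∈ E, pushed f s w z = 1 - s := by
  have hfiber : ∀ x ∈ w.supportFinset,
      ∑ z ∈ E, (f ⁻¹' {z}).indicator (moved s w) x = moved s w x := fun x hx => by
    rw [Finset.sum_eq_single_of_mem (f x) (hE x hx) fun z _ hz =>
      indicator_of_notMem (show x ∉ f ⁻¹' {z} from fun h => hz h.symm) (moved s w)]
    exact indicator_of_mem (show x ∈ f ⁻¹' {f x} from rfl) (moved s w)
  rw [Finset.sum_congr rfl fun z _ => pushed_eq_sum f s (le_refl w.supportFinset) z,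
    Finset.sum_comm, Finset.sum_congr rfl hfiber,
    show moved s w = fun x => w.1 x - kept s w x from rfl, Finset.sum_sub_distrib,
    sum_eq_one le_rfl, sum_kept hs0 hs1]

def prismWeight (f : X → X) (s : ℝ) (w : OrderComplex X) (z : X) : ℝ :=
  kept s w z + pushed f s w z

lemma support_prismWeight_subset (f : X → X) (s : ℝ) (w : OrderComplex X) :
    support (prismWeight f s w) ⊆ support (kept s w) ∪ f '' support (moved s w) := by
  intro z hz
  by_cases hkz : kept s w z = 0
  · have hpz : pushed f s w z ≠ 0 := fun h => hz (by rw [prismWeight, hkz, h, add_zero])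
    rw [pushed_eq_sum f s (le_refl w.supportFinset)] at hpz
    obtain ⟨x, -, hx⟩ := Finset.exists_ne_zero_of_sum_ne_zero hpz
    exact Or.inr ⟨x, (support_indicator.subset hx).2, (support_indicator.subset hx).1⟩
  · exact Or.inl hkz

lemma isChain_support_prismWeight (hf : Monotone f) (hfx : ∀ x, f x ≤ x) (s : ℝ)
    (w : OrderComplex X) : IsChain (· ≤ ·) (support (prismWeight f s w)) := by
  have hK := support_subset_of_le (kept_nonneg s w) (kept_le s w)
  have hM := support_subset_of_le (moved_nonneg s w) (moved_le s w)
  refine IsChain.mono (support_prismWeight_subset f s w) (isChain_union.2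
    ⟨w.isChain_support.mono hK, (w.isChain_support.mono hM).image_of_map_rel _ _ f
      fun _ _ h => hf h, ?_⟩)
  rintro a ha _ ⟨x, hx, rfl⟩ -
  exact Or.inr ((hfx x).trans (le_of_moved_ne_zero_of_kept_ne_zero hx ha))

lemma support_prismWeight_subset_finset [DecidableEq X] (f : X → X) (s : ℝ)
    (w : OrderComplex X) :
    support (prismWeight f s w) ⊆ ↑(w.supportFinset ∪ w.supportFinset.image f) := by
  refine (support_prismWeight_subset f s w).trans ?_
  rw [Finset.coe_union, Finset.coe_image, coe_supportFinset]
  exact union_subset_union (support_subset_of_le (kept_nonneg s w) (kept_le s w))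
    (image_mono (support_subset_of_le (moved_nonneg s w) (moved_le s w)))

lemma finsum_prismWeight (f : X → X) (hs0 : 0 ≤ s) (hs1 : s ≤ 1) (w : OrderComplex X) :
    ∑ᶠ z, prismWeight f s w z = 1 := by
  classical
  have hkept : ∑ z ∈ w.supportFinset ∪ w.supportFinset.image f, kept s w z = s := by
    rw [← Finset.sum_subset Finset.subset_union_left fun z _ hz => by_contra fun h =>
      hz (mem_supportFinset.2 (support_subset_of_le (kept_nonneg s w) (kept_le s w) h)),
      sum_kept hs0 hs1]
  rw [finsum_eq_sum_of_support_subset _ (support_prismWeight_subset_finset f s w)]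
  simp only [prismWeight]
  rw [Finset.sum_add_distrib, hkept, sum_pushed f hs0 hs1 fun x hx =>
    Finset.mem_union_right _ (Finset.mem_image_of_mem f hx)]
  ring

def prism (hf : Monotone f) (hfx : ∀ x, f x ≤ x) (s : I) (w : OrderComplex X) :
    OrderComplex X :=
  ⟨prismWeight f s w, (w.2.1.union (w.2.1.image f)).subset
    ((support_prismWeight_subset f s w).trans (union_subset_union
      (support_subset_of_le (kept_nonneg s w) (kept_le s w))
      (image_mono (support_subset_of_le (moved_nonneg s w) (moved_le s w))))),
    isChain_support_prismWeight hf hfx s w,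
    fun z => add_nonneg (kept_nonneg s w z) (pushed_nonneg f s w z),
    finsum_prismWeight f s.2.1 s.2.2 w⟩

variable (hf : Monotone f) (hfx : ∀ x, f x ≤ x)

lemma prism_one (w : OrderComplex X) : prism hf hfx 1 w = w := by
  refine Subtype.ext (funext fun z => ?_)
  simp [prism, prismWeight, pushed, kept_one, moved_one]

lemma one_sub_le_mass_range_prism (s : I) (w : OrderComplex X) :
    1 - (s : ℝ) ≤ mass (range f) (prism hf hfx s w) := by
  classical
  set E := w.supportFinset ∪ w.supportFinset.image f
  have hE : (prism hf hfx s w).supportFinset ⊆ E := fun z hz => by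
    exact_mod_cast support_prismWeight_subset_finset f s w (mem_supportFinset.1 hz)
  rw [mass_eq_sum _ hE, ← sum_pushed f s.2.1 s.2.2 fun x hx =>
    Finset.mem_union_right _ (Finset.mem_image_of_mem f hx)]
  refine Finset.sum_le_sum fun z _ => ?_
  by_cases hz : z ∈ range f
  · rw [indicator_of_mem hz]
    exact le_add_of_nonneg_left (kept_nonneg s w z)
  · rw [indicator_of_notMem hz, pushed_eq_zero_of_notMem_range hz]

lemma continuous_prism {Y : Type*} [TopologicalSpace Y] {s : Y → I} {φ : Y → OrderComplex X}
    (hs : Continuous s) (hφ : Continuous φ) : Continuous fun y => prism hf hfx (s y) (φ y) := by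
  have hs' : Continuous fun y => (s y : ℝ) := continuous_subtype_val.comp hs
  have hkept : ∀ x, Continuous fun y => kept (s y) (φ y) x := fun x =>
    (hs'.min ((continuous_mass _).comp hφ)).sub (hs'.min ((continuous_mass _).comp hφ))
  refine continuous_of_continuous_apply fun z => (hkept z).add ?_
  refine continuous_finsum_of_le hφ (fun y => indicator_nonneg fun x _ => moved_nonneg _ _ x)
    (fun y x => (indicator_le_self' (fun x _ => moved_nonneg _ _ x) x).trans (moved_le _ _ x))
    fun x => ?_
  by_cases hx : x ∈ f ⁻¹' {z}
  · simp only [indicator_of_mem hx]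
    exact ((continuous_weight_apply x).comp hφ).sub (hkept x)
  · simpa [hx] using continuous_const

end Prism

section Cond

variable {S : Set X}

def cond (S : Set X) (u : OrderComplex X) (hu : 0 < mass S u) : OrderComplex X :=
  ⟨fun x => S.indicator u.1 x / mass S u,
    u.2.1.subset fun x hx => (support_indicator.subset (div_ne_zero_iff.1 hx).1).2,
    u.isChain_support.mono fun x hx => (support_indicator.subset (div_ne_zero_iff.1 hx).1).2,
    fun x => div_nonneg (indicator_nonneg (fun y _ => u.nonneg y) x) hu.le,
    by
      simp only [div_eq_mul_inv]
      rw [← finsum_mul]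
      exact mul_inv_cancel₀ hu.ne'⟩

lemma support_cond_subset (u : OrderComplex X) (hu : 0 < mass S u) :
    support (cond S u hu).1 ⊆ S ∩ support u.1 :=
  fun _ hx => support_indicator.subset (div_ne_zero_iff.1 hx).1

lemma cond_of_support_subset {u : OrderComplex X} (hu : 0 < mass S u) (h : support u.1 ⊆ S) :
    cond S u hu = u := by
  refine Subtype.ext (funext fun x => ?_)
  show S.indicator u.1 x / mass S u = u.1 x
  rw [mass_eq_one_iff.2 h, div_one]
  by_cases hx : x ∈ S
  · exact indicator_of_mem hx _
  · rw [indicator_of_notMem hx, eq_comm]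
    exact notMem_support.1 fun h' => hx (h h')

lemma continuous_cond {Y : Type*} [TopologicalSpace Y] {φ : Y → OrderComplex X}
    (hφ : Continuous φ) (hpos : ∀ y, 0 < mass S (φ y)) :
    Continuous fun y => cond S (φ y) (hpos y) :=
  continuous_of_continuous_apply fun x => ((continuous_indicator_apply S x).comp hφ).div
    ((continuous_mass S).comp hφ) fun y => (hpos y).ne'

end Cond

section Line

def lineMap (u v : OrderComplex X) (huv : support u.1 ⊆ support v.1) (t : I) :
    OrderComplex X :=
  have hsupp : support (fun x => (1 - t) * u.1 x + t * v.1 x) ⊆ support v.1 := fun x hx =>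
    by_contra fun hvx => hx (by
      show (1 - t) * u.1 x + t * v.1 x = 0
      rw [notMem_support.1 hvx, notMem_support.1 (mt (@huv x) hvx)]
      ring)
  ⟨fun x => (1 - t) * u.1 x + t * v.1 x, v.2.1.subset hsupp, v.isChain_support.mono hsupp,
    fun x => add_nonneg (mul_nonneg (sub_nonneg.2 t.2.2) (u.nonneg x))
      (mul_nonneg t.2.1 (v.nonneg x)),
    by
      have hE : support (fun x => (1 - t) * u.1 x + t * v.1 x) ⊆ v.supportFinset := by
        rw [coe_supportFinset]; exact hsupp
      have hu : u.supportFinset ⊆ v.supportFinset := fun x hx => by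
        rw [← Finset.mem_coe, coe_supportFinset] at hx ⊢; exact huv hx
      rw [finsum_eq_sum_of_support_subset _ hE, Finset.sum_add_distrib, ← Finset.mul_sum,
        ← Finset.mul_sum, sum_eq_one hu, sum_eq_one le_rfl]
      ring⟩

def lineHomotopyRel {Y : Type*} [TopologicalSpace Y] (F G : C(Y, OrderComplex X))
    (hFG : ∀ y, support (F y).1 ⊆ support (G y).1) {A : Set Y} (hA : ∀ y ∈ A, F y = G y) :
    F.HomotopyRel G A where
  toFun p := lineMap (F p.2) (G p.2) (hFG p.2) p.1
  continuous_toFun := continuous_of_continuous_apply fun x =>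
    ((continuous_const.sub (continuous_subtype_val.comp continuous_fst)).mul
      ((continuous_weight_apply x).comp (F.continuous.comp continuous_snd))).add
    ((continuous_subtype_val.comp continuous_fst).mul
      ((continuous_weight_apply x).comp (G.continuous.comp continuous_snd)))
  map_zero_left y := Subtype.ext (funext fun x => by simp [lineMap])
  map_one_left y := Subtype.ext (funext fun x => by simp [lineMap])
  prop' t y hy := Subtype.ext (funext fun x => by
    have hx : (F y).1 x = (G y).1 x := by rw [hA y hy]
    show (1 - t) * (F y).1 x + t * (G y).1 x = (F y).1 x
    rw [hx]
    ring)

end Line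

def unitMass (S : Set X) (w : OrderComplex X) : I :=
  ⟨mass S w, mass_nonneg S w, mass_le_one S w⟩

lemma continuous_unitMass (S : Set X) : Continuous (unitMass (X := X) S) :=
  (continuous_mass S).subtype_mk _

lemma unitMass_range_of_mem {f : X → X} {w : OrderComplex X} (hw : w ∈ imageSub f) :
    unitMass (range f) w = 1 :=
  Subtype.ext (mass_eq_one_iff.2 hw)

section Retraction

variable {f : X → X} (hf : Monotone f) (hfx : ∀ x, f x ≤ x)

/-- Lands in the open star `{w | 0 < mass (range f) w}` of `imageSub f`. -/
def toStar : C(OrderComplex X, OrderComplex X) :=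
  ⟨fun w => prism hf hfx (unitMass (range f) w) w,
    continuous_prism hf hfx (continuous_unitMass _) continuous_id⟩

lemma toStar_of_mem {w : OrderComplex X} (hw : w ∈ imageSub f) : toStar hf hfx w = w := by
  simp [toStar, unitMass_range_of_mem hw, prism_one]

lemma mass_range_toStar_pos (w : OrderComplex X) : 0 < mass (range f) (toStar hf hfx w) := by
  by_cases hw : w ∈ imageSub f
  · rw [toStar_of_mem hf hfx hw, mass_eq_one_iff.2 hw]
    exact one_pos
  · have : mass (range f) w < 1 := (mass_le_one _ w).lt_of_ne (mt mass_eq_one_iff.1 hw)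
    exact (sub_pos.2 this).trans_le (one_sub_le_mass_range_prism hf hfx (unitMass (range f) w) w)

def retraction : C(OrderComplex X, OrderComplex X) :=
  ⟨fun w => cond (range f) (toStar hf hfx w) (mass_range_toStar_pos hf hfx w),
    continuous_cond (toStar hf hfx).continuous _⟩

lemma retraction_mem (w : OrderComplex X) : retraction hf hfx w ∈ imageSub f :=
  (support_cond_subset _ (mass_range_toStar_pos hf hfx w)).trans inter_subset_left

lemma retraction_of_mem {w : OrderComplex X} (hw : w ∈ imageSub f) :
    retraction hf hfx w = w := by
  simp only [retraction, ContinuousMap.coe_mk]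
  rw [cond_of_support_subset _ ((toStar_of_mem hf hfx hw).symm ▸ hw), toStar_of_mem hf hfx hw]

def prismHomotopyRel :
    (toStar hf hfx).HomotopyRel (ContinuousMap.id (OrderComplex X)) (imageSub f) where
  toFun p := prism hf hfx (max p.1 (unitMass (range f) p.2)) p.2
  continuous_toFun := continuous_prism hf hfx
    (continuous_fst.max ((continuous_unitMass _).comp continuous_snd)) continuous_snd
  map_zero_left w := by simp [toStar]
  map_one_left w := by simp [max_eq_left le_one', prism_one]
  prop' t w hw := by
    simp [unitMass_range_of_mem hw, max_eq_right (le_one' (t := t)), prism_one,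
      toStar_of_mem hf hfx hw]

end Retraction

theorem isStrongDeformationRetract_imageSub {f : X → X} (hf : Monotone f)
    (hfx : ∀ x, f x ≤ x) :
    IsStrongDeformationRetract (imageSub f) :=
  ⟨retraction hf hfx, retraction_mem hf hfx, fun _ => retraction_of_mem hf hfx,
    ⟨(lineHomotopyRel (retraction hf hfx) (toStar hf hfx)
      (fun w => (support_cond_subset _ (mass_range_toStar_pos hf hfx w)).trans inter_subset_right)
      fun w hw => by rw [retraction_of_mem hf hfx hw, toStar_of_mem hf hfx hw]).trans
      (prismHomotopyRel hf hfx)⟩⟩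

variable (X) in
def toDualHomeomorph : OrderComplex X ≃ₜ OrderComplex Xᵒᵈ where
  toFun w := ⟨w.1, w.2.1, w.isChain_support.symm, w.2.2.2⟩
  invFun w := ⟨w.1, w.2.1, w.isChain_support.symm, w.2.2.2⟩
  left_inv _ := rfl
  right_inv _ := rfl
  continuous_toFun := continuous_subtype_val.subtype_mk _
  continuous_invFun := continuous_subtype_val.subtype_mk _

end OrderComplex

end

/-- Poset Lemma (Quillen): if `f : X → X` is a poset map with `f x ≤ x` for all
`x` (or `f x ≥ x` for all `x`), then the order complex of `f(X)` is a
deformation retract of the order complex of `X`; in particular the inclusion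
induces a homotopy equivalence. -/
theorem stmt_9 (X : Type*) [PartialOrder X] (f : X → X) (hmono : Monotone f)
    (h : (∀ x, f x ≤ x) ∨ (∀ x, x ≤ f x)) :
    ∃ r : C(OrderComplex X, OrderComplex X),
      (∀ w, r w ∈ OrderComplex.imageSub f) ∧
      (∀ w ∈ OrderComplex.imageSub f, r w = w) ∧
      ContinuousMap.HomotopicRel r (ContinuousMap.id (OrderComplex X))
        (OrderComplex.imageSub f) := by
  rcases h with hle | hge
  · exact OrderComplex.isStrongDeformationRetract_imageSub hmono hle
  · exact (OrderComplex.isStrongDeformationRetract_imageSub (f := OrderDual.toDual ∘ f ∘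
      OrderDual.ofDual) hmono.dual hge).preimage_homeomorph (OrderComplex.toDualHomeomorph X)
end
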